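/- Let u, v : ℝ × ℝ → ℝ be smooth functions solving the Hirota–Satsuma system, and define φ = −u_x + (1/3)u² + 2v. Then φ_x = u_t and u satisfies the Hirota–Satsuma equation in its original nonlocal form: u_{tt} + (1/3)·∂_x( u_{xxx} − (2/3) u² u_x − 2 u_x φ ) = 0. -/

import Mathlib

/-- Partial derivative in the first (space) variable. -/
noncomputable def pdx (f : ℝ → ℝ → ℝ) : ℝ → ℝ → ℝ := fun x t => deriv (fun x' => f x' t) x

/-- Partial derivative in the second (time) variable. -/
noncomputable def pdt (f : ℝ → ℝ → ℝ) : ℝ → ℝ → ℝ := fun x t => deriv (fun t' => f x t') t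

/-- The Hirota–Satsuma system. -/
def HirotaSatsuma (u v : ℝ → ℝ → ℝ) : Prop :=
  ∀ x t : ℝ,
    pdt u x t = -(pdx (pdx u) x t) + (2/3) * u x t * pdx u x t + 2 * pdx v x t ∧
    pdt v x t = -(2/3) * pdx (pdx (pdx u)) x t + (2/3) * u x t * pdx (pdx u) x t
      + (2/3) * pdx u x t * v x t - (2/3) * u x t * pdx v x t + pdx (pdx v) x t

/-- The good Boussinesq system. -/
def GoodBoussinesq (w h : ℝ → ℝ → ℝ) : Prop :=
  ∀ x t : ℝ,
    pdt w x t = pdx h x t ∧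
    pdt h x t + (1/3) * pdx (pdx (pdx w)) x t
      + (4/3) * pdx (fun x t => (w x t)^2) x t = 0

/-- The modified Boussinesq system. -/
def ModifiedBoussinesq (p q : ℝ → ℝ → ℝ) : Prop :=
  ∀ x t : ℝ,
    pdt p x t = 2 * pdx (fun x t => p x t * q x t) x t + pdx (pdx q) x t ∧
    pdt q x t = -(1/3) * pdx (pdx p) x t + (2/3) * p x t * pdx p x t
      - 2 * q x t * pdx q x t

/-- The antiderivative φ = −u_x + (1/3)u² + 2v of u_t in x. -/
noncomputable def HSphi (u v : ℝ → ℝ → ℝ) : ℝ → ℝ → ℝ :=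
  fun x t => -pdx u x t + (1/3) * (u x t)^2 + 2 * v x t

def Sm (f : ℝ → ℝ → ℝ) : Prop := ContDiff ℝ (⊤ : ℕ∞) (fun s : ℝ × ℝ => f s.1 s.2)

namespace Sm
variable {f : ℝ → ℝ → ℝ}

lemma hasDerivAt_x (hf : Sm f) (x t : ℝ) : HasDerivAt (fun x' => f x' t) (pdx f x t) x := by
  have h : DifferentiableAt ℝ (fun x' => f x' t) x := by
    have : (fun x' => f x' t) = (fun s : ℝ × ℝ => f s.1 s.2) ∘ (fun x' => (x', t)) := rfl
    rw [this]
    exact ((hf.differentiable (by simp)).comp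
      ((differentiable_id).prodMk (differentiable_const t))).differentiableAt
  exact h.hasDerivAt

lemma hasDerivAt_t (hf : Sm f) (x t : ℝ) : HasDerivAt (fun t' => f x t') (pdt f x t) t := by
  have h : DifferentiableAt ℝ (fun t' => f x t') t := by
    have : (fun t' => f x t') = (fun s : ℝ × ℝ => f s.1 s.2) ∘ (fun t' => (x, t')) := rfl
    rw [this]
    exact ((hf.differentiable (by simp)).comp
      ((differentiable_const x).prodMk differentiable_id)).differentiableAt
  exact h.hasDerivAt

lemma pdx_eq_fderiv (hf : Sm f) (x t : ℝ) :
    pdx f x t = fderiv ℝ (fun s : ℝ × ℝ => f s.1 s.2) (x, t) ((1 : ℝ), (0 : ℝ)) := by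
  have hL : HasDerivAt (fun x' : ℝ => ((x', t) : ℝ × ℝ)) ((1 : ℝ), (0 : ℝ)) x :=
    (hasDerivAt_id x).prodMk (hasDerivAt_const x t)
  have H := (((hf.differentiable (by simp)) (x, t)).hasFDerivAt.comp_hasDerivAt x hL).deriv.symm
  simpa [pdx, Function.comp_def] using H.symm

lemma pdt_eq_fderiv (hf : Sm f) (x t : ℝ) :
    pdt f x t = fderiv ℝ (fun s : ℝ × ℝ => f s.1 s.2) (x, t) ((0 : ℝ), (1 : ℝ)) := by
  have hL : HasDerivAt (fun t' : ℝ => ((x, t') : ℝ × ℝ)) ((0 : ℝ), (1 : ℝ)) t :=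
    (hasDerivAt_const t x).prodMk (hasDerivAt_id t)
  have H := (((hf.differentiable (by simp)) (x, t)).hasFDerivAt.comp_hasDerivAt t hL).deriv.symm
  simpa [pdt, Function.comp_def] using H.symm

lemma smooth_dir (hf : Sm f) (w : ℝ × ℝ) :
    ContDiff ℝ (⊤ : ℕ∞) (fun s : ℝ × ℝ => fderiv ℝ (fun s : ℝ × ℝ => f s.1 s.2) s w) :=
  (hf.fderiv_right (by simp)).clm_apply contDiff_const

lemma pdx (hf : Sm f) : Sm (pdx f) := by
  have : (fun s : ℝ × ℝ => _root_.pdx f s.1 s.2)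
      = fun s : ℝ × ℝ => fderiv ℝ (fun s : ℝ × ℝ => f s.1 s.2) s ((1 : ℝ), (0 : ℝ)) := by
    funext s; exact hf.pdx_eq_fderiv s.1 s.2
  rw [Sm, this]; exact hf.smooth_dir _

lemma pdt' (hf : Sm f) : Sm (pdt f) := by
  have : (fun s : ℝ × ℝ => _root_.pdt f s.1 s.2)
      = fun s : ℝ × ℝ => fderiv ℝ (fun s : ℝ × ℝ => f s.1 s.2) s ((0 : ℝ), (1 : ℝ)) := by
    funext s; exact hf.pdt_eq_fderiv s.1 s.2
  rw [Sm, this]; exact hf.smooth_dir _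

lemma clairaut (hf : Sm f) (x t : ℝ) : pdt (_root_.pdx f) x t = _root_.pdx (pdt f) x t := by
  set F : ℝ × ℝ → ℝ := fun s => f s.1 s.2 with hF
  have hFd : ∀ y, HasFDerivAt F (fderiv ℝ F y) y := fun y =>
    ((hf.differentiable (by simp)) y).hasFDerivAt
  have hF2 : HasFDerivAt (fderiv ℝ F) (fderiv ℝ (fderiv ℝ F) (x, t)) (x, t) :=
    (((hf.fderiv_right (m := (⊤ : ℕ∞)) (by simp)).differentiable (by simp)) (x, t)).hasFDerivAt
  have hsymm := second_derivative_symmetric hFd hF2 ((1:ℝ), (0:ℝ)) ((0:ℝ), (1:ℝ))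
  -- pdt (pdx f) x t
  have e1 : pdt (_root_.pdx f) x t
      = (fderiv ℝ (fderiv ℝ F) (x, t) ((0:ℝ), (1:ℝ))) ((1:ℝ), (0:ℝ)) := by
    rw [(hf.pdx).pdt_eq_fderiv x t]
    have h1 : (fun s : ℝ × ℝ => _root_.pdx f s.1 s.2)
        = fun s => fderiv ℝ F s ((1:ℝ), (0:ℝ)) := by
      funext s; exact hf.pdx_eq_fderiv s.1 s.2
    rw [h1]
    have hc : DifferentiableAt ℝ (fderiv ℝ F) (x, t) :=
      ((hf.fderiv_right (m := (⊤ : ℕ∞)) (by simp)).differentiable (by simp)) (x, t)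
    rw [fderiv_clm_apply hc (differentiableAt_const _)]
    simp
  have e2 : _root_.pdx (pdt f) x t
      = (fderiv ℝ (fderiv ℝ F) (x, t) ((1:ℝ), (0:ℝ))) ((0:ℝ), (1:ℝ)) := by
    rw [(hf.pdt').pdx_eq_fderiv x t]
    have h1 : (fun s : ℝ × ℝ => _root_.pdt f s.1 s.2)
        = fun s => fderiv ℝ F s ((0:ℝ), (1:ℝ)) := by
      funext s; exact hf.pdt_eq_fderiv s.1 s.2
    rw [h1]
    have hc : DifferentiableAt ℝ (fderiv ℝ F) (x, t) :=
      ((hf.fderiv_right (m := (⊤ : ℕ∞)) (by simp)).differentiable (by simp)) (x, t)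
    rw [fderiv_clm_apply hc (differentiableAt_const _)]
    simp
  rw [e1, e2, hsymm]

end Sm

lemma pdx_congr {f g : ℝ → ℝ → ℝ} (h : ∀ x t, f x t = g x t) (x t : ℝ) :
    pdx f x t = pdx g x t := by
  have : (fun x' => f x' t) = (fun x' => g x' t) := funext fun x' => h x' t
  simp only [pdx, this]

lemma pdt_congr {f g : ℝ → ℝ → ℝ} (h : ∀ x t, f x t = g x t) (x t : ℝ) :
    pdt f x t = pdt g x t := by
  have : (fun t' => f x t') = (fun t' => g x t') := funext fun t' => h x t'
  simp only [pdt, this]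

theorem hirotaSatsuma_aux (u v : ℝ → ℝ → ℝ)
    (hu : ContDiff ℝ (⊤ : ℕ∞) (fun s : ℝ × ℝ => u s.1 s.2))
    (hv : ContDiff ℝ (⊤ : ℕ∞) (fun s : ℝ × ℝ => v s.1 s.2))
    (hHS : ∀ x t : ℝ,
      pdt u x t = -(pdx (pdx u) x t) + (2/3) * u x t * pdx u x t + 2 * pdx v x t ∧
      pdt v x t = -(2/3) * pdx (pdx (pdx u)) x t + (2/3) * u x t * pdx (pdx u) x t
        + (2/3) * pdx u x t * v x t - (2/3) * u x t * pdx v x t + pdx (pdx v) x t) :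
    ∀ x t : ℝ,
      pdx (fun x t => -pdx u x t + (1/3) * (u x t)^2 + 2 * v x t) x t = pdt u x t ∧
      pdt (pdt u) x t
        + (1/3) * pdx (fun x t => pdx (pdx (pdx u)) x t
            - (2/3) * (u x t)^2 * pdx u x t
            - 2 * pdx u x t * (fun x t => -pdx u x t + (1/3) * (u x t)^2 + 2 * v x t) x t) x t = 0 := by
  have hu' : Sm u := hu
  have hv' : Sm v := hv
  have hu1 : Sm (pdx u) := hu'.pdx
  have hu2 : Sm (pdx (pdx u)) := hu1.pdx
  have hu3 : Sm (pdx (pdx (pdx u))) := hu2.pdx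
  have hv1 : Sm (pdx v) := hv'.pdx
  have hv2 : Sm (pdx (pdx v)) := hv1.pdx
  have E1 : ∀ x t : ℝ, pdt u x t
      = -(pdx (pdx u) x t) + 2/3 * u x t * pdx u x t + 2 * pdx v x t :=
    fun x t => (hHS x t).1
  have E2 : ∀ x t : ℝ, pdt v x t
      = -(2/3) * pdx (pdx (pdx u)) x t + 2/3 * u x t * pdx (pdx u) x t
        + 2/3 * pdx u x t * v x t - 2/3 * u x t * pdx v x t + pdx (pdx v) x t :=
    fun x t => (hHS x t).2
  -- expansion of pdx (pdt u)
  have A1 : ∀ x t : ℝ, pdx (pdt u) x t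
      = -(pdx (pdx (pdx u)) x t)
        + (2/3 * pdx u x t * pdx u x t + 2/3 * u x t * pdx (pdx u) x t)
        + 2 * pdx (pdx v) x t := by
    intro x t
    have hfun : (fun x' => pdt u x' t)
        = fun x' => -(pdx (pdx u) x' t) + 2/3 * u x' t * pdx u x' t + 2 * pdx v x' t :=
      funext fun x' => E1 x' t
    have hD : deriv (fun x' => -(pdx (pdx u) x' t) + 2/3 * u x' t * pdx u x' t
          + 2 * pdx v x' t) x
        = -(pdx (pdx (pdx u)) x t)
          + (2/3 * pdx u x t * pdx u x t + 2/3 * u x t * pdx (pdx u) x t)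
          + 2 * pdx (pdx v) x t :=
      (((hu2.hasDerivAt_x x t).neg.add
        (((hu'.hasDerivAt_x x t).const_mul (2/3 : ℝ)).mul (hu1.hasDerivAt_x x t))).add
        ((hv1.hasDerivAt_x x t).const_mul (2 : ℝ))).deriv
    show deriv (fun x' => pdt u x' t) x = _
    rw [hfun, hD]
  -- expansion of pdx (pdx (pdt u))
  have A2 : ∀ x t : ℝ, pdx (pdx (pdt u)) x t
      = -(pdx (pdx (pdx (pdx u))) x t)
        + (2/3 * pdx (pdx u) x t * pdx u x t + 2/3 * pdx u x t * pdx (pdx u) x t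
          + (2/3 * pdx u x t * pdx (pdx u) x t + 2/3 * u x t * pdx (pdx (pdx u)) x t))
        + 2 * pdx (pdx (pdx v)) x t := by
    intro x t
    have hfun : (fun x' => pdx (pdt u) x' t)
        = fun x' => -(pdx (pdx (pdx u)) x' t)
          + (2/3 * pdx u x' t * pdx u x' t + 2/3 * u x' t * pdx (pdx u) x' t)
          + 2 * pdx (pdx v) x' t :=
      funext fun x' => A1 x' t
    have hD : deriv (fun x' => -(pdx (pdx (pdx u)) x' t)
          + (2/3 * pdx u x' t * pdx u x' t + 2/3 * u x' t * pdx (pdx u) x' t)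
          + 2 * pdx (pdx v) x' t) x
        = -(pdx (pdx (pdx (pdx u))) x t)
          + (2/3 * pdx (pdx u) x t * pdx u x t + 2/3 * pdx u x t * pdx (pdx u) x t
            + (2/3 * pdx u x t * pdx (pdx u) x t + 2/3 * u x t * pdx (pdx (pdx u)) x t))
          + 2 * pdx (pdx (pdx v)) x t :=
      (((hu3.hasDerivAt_x x t).neg.add
        ((((hu1.hasDerivAt_x x t).const_mul (2/3 : ℝ)).mul (hu1.hasDerivAt_x x t)).add
          (((hu'.hasDerivAt_x x t).const_mul (2/3 : ℝ)).mul (hu2.hasDerivAt_x x t)))).add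
        ((hv2.hasDerivAt_x x t).const_mul (2 : ℝ))).deriv
    show deriv (fun x' => pdx (pdt u) x' t) x = _
    rw [hfun, hD]
  -- expansion of pdx (pdt v)
  have A3 : ∀ x t : ℝ, pdx (pdt v) x t
      = -(2/3) * pdx (pdx (pdx (pdx u))) x t
        + (2/3 * pdx u x t * pdx (pdx u) x t + 2/3 * u x t * pdx (pdx (pdx u)) x t)
        + (2/3 * pdx (pdx u) x t * v x t + 2/3 * pdx u x t * pdx v x t)
        - (2/3 * pdx u x t * pdx v x t + 2/3 * u x t * pdx (pdx v) x t)
        + pdx (pdx (pdx v)) x t := by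
    intro x t
    have hfun : (fun x' => pdt v x' t)
        = fun x' => -(2/3) * pdx (pdx (pdx u)) x' t + 2/3 * u x' t * pdx (pdx u) x' t
          + 2/3 * pdx u x' t * v x' t - 2/3 * u x' t * pdx v x' t + pdx (pdx v) x' t :=
      funext fun x' => E2 x' t
    have hD : deriv (fun x' => -(2/3) * pdx (pdx (pdx u)) x' t
          + 2/3 * u x' t * pdx (pdx u) x' t
          + 2/3 * pdx u x' t * v x' t - 2/3 * u x' t * pdx v x' t
          + pdx (pdx v) x' t) x
        = -(2/3) * pdx (pdx (pdx (pdx u))) x t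
          + (2/3 * pdx u x t * pdx (pdx u) x t + 2/3 * u x t * pdx (pdx (pdx u)) x t)
          + (2/3 * pdx (pdx u) x t * v x t + 2/3 * pdx u x t * pdx v x t)
          - (2/3 * pdx u x t * pdx v x t + 2/3 * u x t * pdx (pdx v) x t)
          + pdx (pdx (pdx v)) x t :=
      (((((hu3.hasDerivAt_x x t).const_mul (-(2/3) : ℝ)).add
          (((hu'.hasDerivAt_x x t).const_mul (2/3 : ℝ)).mul (hu2.hasDerivAt_x x t))).add
          (((hu1.hasDerivAt_x x t).const_mul (2/3 : ℝ)).mul (hv'.hasDerivAt_x x t))).sub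
          (((hu'.hasDerivAt_x x t).const_mul (2/3 : ℝ)).mul (hv1.hasDerivAt_x x t))).add
          (hv2.hasDerivAt_x x t) |>.deriv
    show deriv (fun x' => pdt v x' t) x = _
    rw [hfun, hD]
  -- Clairaut chains
  have C1 : ∀ x t : ℝ, pdt (pdx (pdx u)) x t = pdx (pdx (pdt u)) x t := by
    intro x t
    rw [hu1.clairaut x t]
    exact pdx_congr (fun a b => hu'.clairaut a b) x t
  have C2 : ∀ x t : ℝ, pdt (pdx u) x t = pdx (pdt u) x t := fun x t => hu'.clairaut x t
  have C3 : ∀ x t : ℝ, pdt (pdx v) x t = pdx (pdt v) x t := fun x t => hv'.clairaut x t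
  -- expansion of pdt (pdt u)
  have Dtt : ∀ x t : ℝ, pdt (pdt u) x t
      = -(pdt (pdx (pdx u)) x t)
        + (2/3 * pdt u x t * pdx u x t + 2/3 * u x t * pdt (pdx u) x t)
        + 2 * pdt (pdx v) x t := by
    intro x t
    have hfun : (fun t' => pdt u x t')
        = fun t' => -(pdx (pdx u) x t') + 2/3 * u x t' * pdx u x t' + 2 * pdx v x t' :=
      funext fun t' => E1 x t'
    have hD : deriv (fun t' => -(pdx (pdx u) x t') + 2/3 * u x t' * pdx u x t'
          + 2 * pdx v x t') t
        = -(pdt (pdx (pdx u)) x t)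
          + (2/3 * pdt u x t * pdx u x t + 2/3 * u x t * pdt (pdx u) x t)
          + 2 * pdt (pdx v) x t :=
      (((hu2.hasDerivAt_t x t).neg.add
        (((hu'.hasDerivAt_t x t).const_mul (2/3 : ℝ)).mul (hu1.hasDerivAt_t x t))).add
        ((hv1.hasDerivAt_t x t).const_mul (2 : ℝ))).deriv
    show deriv (fun t' => pdt u x t') t = _
    rw [hfun, hD]
  intro x t
  -- φ_x
  have Hphi : HasDerivAt (fun x' => -pdx u x' t + (1/3) * (u x' t)^2 + 2 * v x' t)
      (-pdx (pdx u) x t + 1/3 * (2 * u x t * pdx u x t) + 2 * pdx v x t) x := by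
    have h2 : HasDerivAt (fun x' => (u x' t)^2) (2 * u x t * pdx u x t) x := by
      have := (hu'.hasDerivAt_x x t).pow 2
      exact (by simpa using this : HasDerivAt ((fun x' => u x' t) ^ 2) (2 * u x t * pdx u x t) x)
    exact ((hu1.hasDerivAt_x x t).neg.add (h2.const_mul (1/3 : ℝ))).add
      ((hv'.hasDerivAt_x x t).const_mul (2 : ℝ))
  have Dphi : pdx (fun x t => -pdx u x t + (1/3) * (u x t)^2 + 2 * v x t) x t
      = -pdx (pdx u) x t + 1/3 * (2 * u x t * pdx u x t) + 2 * pdx v x t := Hphi.deriv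
  constructor
  · rw [Dphi, E1 x t]; ring
  · -- expansion of pdx G
    have Hsq : HasDerivAt (fun x' => (u x' t)^2) (2 * u x t * pdx u x t) x := by
      have := (hu'.hasDerivAt_x x t).pow 2
      exact (by simpa using this : HasDerivAt ((fun x' => u x' t) ^ 2) (2 * u x t * pdx u x t) x)
    have hD : deriv (fun x' => pdx (pdx (pdx u)) x' t
          - (2/3) * (u x' t)^2 * pdx u x' t
          - 2 * pdx u x' t * (-pdx u x' t + (1/3) * (u x' t)^2 + 2 * v x' t)) x
        = pdx (pdx (pdx (pdx u))) x t
          - (2/3 * (2 * u x t * pdx u x t) * pdx u x t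
            + 2/3 * (u x t)^2 * pdx (pdx u) x t)
          - (2 * pdx (pdx u) x t * (-pdx u x t + (1/3) * (u x t)^2 + 2 * v x t)
            + 2 * pdx u x t * (-pdx (pdx u) x t + 1/3 * (2 * u x t * pdx u x t)
              + 2 * pdx v x t)) :=
      (((hu3.hasDerivAt_x x t).sub
        (((Hsq.const_mul (2/3 : ℝ)).mul (hu1.hasDerivAt_x x t)))).sub
        (((hu1.hasDerivAt_x x t).const_mul (2 : ℝ)).mul Hphi)).deriv
    have Dg : pdx (fun x t => pdx (pdx (pdx u)) x t
          - (2/3) * (u x t)^2 * pdx u x t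
          - 2 * pdx u x t * (fun x t => -pdx u x t + (1/3) * (u x t)^2 + 2 * v x t) x t) x t
        = pdx (pdx (pdx (pdx u))) x t
          - (2/3 * (2 * u x t * pdx u x t) * pdx u x t
            + 2/3 * (u x t)^2 * pdx (pdx u) x t)
          - (2 * pdx (pdx u) x t * (-pdx u x t + (1/3) * (u x t)^2 + 2 * v x t)
            + 2 * pdx u x t * (-pdx (pdx u) x t + 1/3 * (2 * u x t * pdx u x t)
              + 2 * pdx v x t)) := hD
    rw [Dg, Dtt x t, C1 x t, A2 x t, C2 x t, A1 x t, C3 x t, A3 x t, E1 x t]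
    ring


/-- For a solution of the Hirota–Satsuma system, φ = −u_x + (1/3)u² + 2v satisfies
φ_x = u_t, and u solves the original nonlocal Hirota–Satsuma equation. -/
theorem hirotaSatsuma_nonlocal_form (u v : ℝ → ℝ → ℝ)
    (hu : ContDiff ℝ (⊤ : ℕ∞) (fun s : ℝ × ℝ => u s.1 s.2))
    (hv : ContDiff ℝ (⊤ : ℕ∞) (fun s : ℝ × ℝ => v s.1 s.2))
    (hHS : HirotaSatsuma u v) :
    ∀ x t : ℝ,
      pdx (HSphi u v) x t = pdt u x t ∧
      pdt (pdt u) x t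
        + (1/3) * pdx (fun x t => pdx (pdx (pdx u)) x t
            - (2/3) * (u x t)^2 * pdx u x t
            - 2 * pdx u x t * HSphi u v x t) x t = 0 := by
  have h := hirotaSatsuma_aux u v hu hv (fun x t => ⟨(hHS x t).1, (hHS x t).2⟩)
  intro x t
  exact h x t
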